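/- Let a = a₀ + Σ_{ℓ=1}^m a_ℓ(x^ℓ + x^{−ℓ}) ∈ ℤ[x,x⁻¹] with a₀² + 2Σ a_ℓ² < a₀ + 4Σ a_ℓ. Then for every n > 4m, the integral form Lₙ(a) of rank 4n (the x⁰-coefficient form of L(a) over ℤ[x]/(xⁿ−1)) is positive definite, unimodular, and not isomorphic to the standard form: the vector w₁ = N(e₃+e₄) − 2e₁ is characteristic with norm 4n − 4((1 + 2a₀ + 4Σa_ℓ) − (1 + a₀ + a₀² + 2Σa_ℓ²)) < 4n. -/

import Mathlib

noncomputable section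

/-- `Λₙ = ℤ[x]/(xⁿ−1)`, realized as the group ring `ℤ[ℤ/n]`. -/
abbrev Lam (n : ℕ) := AddMonoidAlgebra ℤ (ZMod n)

/-- The monomial `x^d` in `Λₙ`. -/
def Xp (n : ℕ) (d : ℤ) : Lam n := AddMonoidAlgebra.single ((d : ZMod n)) 1

/-- The matrix `L(a)` over `Λₙ`, obtained by substituting `a` for `t`. -/
def LmatA (n : ℕ) (a : Lam n) : Matrix (Fin 4) (Fin 4) (Lam n) :=
  !![1 + a + a ^ 2, a + a ^ 2, 1 + a, a;
     a + a ^ 2, 1 + a + a ^ 2, a, 1 + a;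
     1 + a, a, 2, 0;
     a, 1 + a, 0, 2]

/-- The involution of `Λₙ` sending `x` to `x⁻¹`. -/
def conj (n : ℕ) (f : Lam n) : Lam n := AddMonoidAlgebra.ofCoeff (Finsupp.mapDomain (fun d => -d) f.coeff)

/-- The `Λₙ`-valued hermitian form given by `L(a)`. -/
def hermA (n : ℕ) (a : Lam n) (v w : Fin 4 → Lam n) : Lam n :=
  ∑ i, ∑ j, conj n (v i) * LmatA n a i j * w j

/-- The `ℤ`-valued form `Lₙ(a)` on `Λₙ⁴ ≅ ℤ⁴ⁿ`: the `x⁰`-coefficient of the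
`Λₙ`-valued form. -/
def LnA (n : ℕ) (a : Lam n) (v w : Fin 4 → Lam n) : ℤ := (hermA n a v w).coeff 0

/-- The norm element `N = 1 + x + ⋯ + xⁿ⁻¹`. -/
def Nn (n : ℕ) : Lam n := ∑ d ∈ Finset.range n, AddMonoidAlgebra.single ((d : ZMod n)) (1 : ℤ)

/-- The standard `Λₙ`-basis vectors of `Λₙ⁴`. -/
def ee (n : ℕ) (i : Fin 4) : Fin 4 → Lam n := Pi.single i 1

set_option linter.unusedSectionVars false
namespace Aux

open AddMonoidAlgebra Finsupp

instance instCoeFunLam (n : ℕ) : CoeFun (Lam n) (fun _ => ZMod n → ℤ) := ⟨fun f => f.coeff⟩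

variable (n : ℕ) [NeZero n]

/-- neg as an AddMonoidHom on `ZMod n` -/
def negHom : ZMod n →+ ZMod n := AddMonoidHom.mk' (fun d => -d) fun a b => neg_add a b

lemma conj_eq (f : Lam n) : conj n f = AddMonoidAlgebra.mapDomain (negHom n) f := rfl

lemma conj_add (f g : Lam n) : conj n (f + g) = conj n f + conj n g :=
  AddMonoidAlgebra.mapDomain_add _ f g

lemma conj_mul (f g : Lam n) : conj n (f * g) = conj n f * conj n g := by
  rw [conj_eq, conj_eq, conj_eq]
  exact AddMonoidAlgebra.mapDomain_mul (negHom n) f g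

lemma conj_single (d : ZMod n) (b : ℤ) :
    conj n (AddMonoidAlgebra.single d b) = AddMonoidAlgebra.single (-d) b := by
  rw [conj_eq]; exact AddMonoidAlgebra.mapDomain_single

lemma conj_one : conj n (1 : Lam n) = 1 := by
  rw [AddMonoidAlgebra.one_def, conj_single, neg_zero]

lemma conj_zero : conj n (0 : Lam n) = 0 := AddMonoidAlgebra.mapDomain_zero _

lemma conj_smul (z : ℤ) (f : Lam n) : conj n (z • f) = z • conj n f := by
  unfold conj
  rw [AddMonoidAlgebra.coeff_smul, Finsupp.mapDomain_smul, AddMonoidAlgebra.ofCoeff_smul]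

lemma conj_neg (f : Lam n) : conj n (-f) = -(conj n f) := by
  rw [← neg_one_zsmul f, conj_smul, neg_one_zsmul]

lemma conj_sum {ι : Type*} (s : Finset ι) (f : ι → Lam n) :
    conj n (∑ i ∈ s, f i) = ∑ i ∈ s, conj n (f i) := by
  classical
  induction s using Finset.induction with
  | empty => simp [conj_zero]
  | insert x s hx ih => rw [Finset.sum_insert hx, Finset.sum_insert hx, conj_add, ih]

lemma conj_conj (f : Lam n) : conj n (conj n f) = f := by
  unfold conj
  rw [AddMonoidAlgebra.coeff_ofCoeff, ← Finsupp.mapDomain_comp]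
  simp [Function.comp_def]

lemma conj_apply (f : Lam n) (d : ZMod n) : conj n f d = f (-d) := by
  conv_lhs => rw [show d = -(-d) by ring]
  exact Finsupp.mapDomain_apply neg_injective f.coeff (-d)


section Bil
variable {n}

def Bil (f g : Lam n) : ℤ := ∑ d : ZMod n, f d * g d

lemma Bil_comm (f g : Lam n) : Bil f g = Bil g f := by
  unfold Bil; exact Finset.sum_congr rfl fun d _ => mul_comm _ _

lemma Bil_add_right (f g h : Lam n) : Bil f (g + h) = Bil f g + Bil f h := by
  unfold Bil
  rw [← Finset.sum_add_distrib]
  exact Finset.sum_congr rfl fun d _ => by rw [AddMonoidAlgebra.coeff_add, Finsupp.add_apply, mul_add]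

lemma Bil_add_left (f g h : Lam n) : Bil (f + g) h = Bil f h + Bil g h := by
  rw [Bil_comm, Bil_add_right, Bil_comm h f, Bil_comm h g]

lemma Bil_zero_right (f : Lam n) : Bil f 0 = 0 := by
  unfold Bil; simp

lemma Bil_zero_left (f : Lam n) : Bil 0 f = 0 := by rw [Bil_comm, Bil_zero_right]

lemma Bil_smul_right (z : ℤ) (f g : Lam n) : Bil f (z • g) = z * Bil f g := by
  unfold Bil
  rw [Finset.mul_sum]
  exact Finset.sum_congr rfl fun d _ => by
    rw [AddMonoidAlgebra.coeff_smul, Finsupp.smul_apply, smul_eq_mul]; ring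

lemma Bil_smul_left (z : ℤ) (f g : Lam n) : Bil (z • f) g = z * Bil f g := by
  rw [Bil_comm, Bil_smul_right, Bil_comm]

lemma Bil_sum_left {ι : Type*} (s : Finset ι) (f : ι → Lam n) (g : Lam n) :
    Bil (∑ i ∈ s, f i) g = ∑ i ∈ s, Bil (f i) g := by
  classical
  induction s using Finset.induction with
  | empty => simp [Bil_zero_left]
  | insert x s hx ih =>
      rw [Finset.sum_insert hx, Finset.sum_insert hx, Bil_add_left, ih]

lemma Bil_sum_right {ι : Type*} (s : Finset ι) (f : Lam n) (g : ι → Lam n) :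
    Bil f (∑ i ∈ s, g i) = ∑ i ∈ s, Bil f (g i) := by
  rw [Bil_comm, Bil_sum_left]
  exact Finset.sum_congr rfl fun i _ => Bil_comm _ _

lemma Bil_single_left (d : ZMod n) (b : ℤ) (g : Lam n) :
    Bil (AddMonoidAlgebra.single d b) g = b * g d := by
  unfold Bil
  rw [Finset.sum_eq_single d]
  · rw [AddMonoidAlgebra.coeff_single, Finsupp.single_eq_same]
  · intro e _ he
    rw [AddMonoidAlgebra.coeff_single, Finsupp.single_eq_of_ne' (Ne.symm he), zero_mul]
  · simp

/-- The key link between multiplication, `conj` and `Bil`. -/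
lemma bil_eq (f g : Lam n) : (conj n f * g) 0 = Bil f g := by
  induction f using AddMonoidAlgebra.induction_linear with
  | zero => rw [conj_zero, zero_mul, Bil_zero_left]; rfl
  | add f f' hf hf' =>
      rw [conj_add, add_mul, AddMonoidAlgebra.coeff_add, Finsupp.add_apply, hf, hf', Bil_add_left]
  | single d b =>
      rw [conj_single, Bil_single_left, AddMonoidAlgebra.coeff_single_mul_apply]
      rw [neg_neg, add_zero]

lemma Bil_mul_right (c f g : Lam n) : Bil f (c * g) = Bil (conj n c * f) g := by
  rw [← bil_eq, ← bil_eq, conj_mul, conj_conj, ← mul_assoc, mul_comm (conj n f) c,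
    mul_assoc]

lemma Bil_mul_left (c f g : Lam n) : Bil (c * f) g = Bil f (conj n c * g) := by
  rw [Bil_comm, Bil_mul_right, Bil_comm]

lemma Bil_self_nonneg (f : Lam n) : 0 ≤ Bil f f :=
  Finset.sum_nonneg fun d _ => mul_self_nonneg _

lemma Bil_self_eq_zero {f : Lam n} (h : Bil f f = 0) : f = 0 := by
  have h2 : ∀ d ∈ (Finset.univ : Finset (ZMod n)), (0:ℤ) ≤ f d * f d :=
    fun d _ => mul_self_nonneg _
  have hz := (Finset.sum_eq_zero_iff_of_nonneg h2).mp h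
  ext d
  have hd := hz d (Finset.mem_univ d)
  have : f d = 0 := by nlinarith
  simpa using this

end Bil

section Sc
variable {n}

def Sc (f : Lam n) : ℤ := ∑ d : ZMod n, f d

lemma Sc_add (f g : Lam n) : Sc (f + g) = Sc f + Sc g := by
  unfold Sc
  rw [← Finset.sum_add_distrib]
  exact Finset.sum_congr rfl fun d _ => Finsupp.add_apply f.coeff g.coeff d

lemma Sc_zero : Sc (0 : Lam n) = 0 := by unfold Sc; simp

lemma Sc_single (d : ZMod n) (b : ℤ) : Sc (AddMonoidAlgebra.single d b) = b := by
  unfold Sc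
  rw [Finset.sum_eq_single d]
  · exact Finsupp.single_eq_same
  · intro e _ he; exact Finsupp.single_eq_of_ne' (Ne.symm he)
  · simp

lemma Sc_one : Sc (1 : Lam n) = 1 := by rw [AddMonoidAlgebra.one_def, Sc_single]

lemma Sc_smul (z : ℤ) (f : Lam n) : Sc (z • f) = z * Sc f := by
  unfold Sc
  rw [Finset.mul_sum]
  exact Finset.sum_congr rfl fun d _ => by rw [AddMonoidAlgebra.coeff_smul, Finsupp.smul_apply, smul_eq_mul]

lemma Sc_sum {ι : Type*} (s : Finset ι) (f : ι → Lam n) :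
    Sc (∑ i ∈ s, f i) = ∑ i ∈ s, Sc (f i) := by
  classical
  induction s using Finset.induction with
  | empty => simp [Sc_zero]
  | insert x s hx ih => rw [Finset.sum_insert hx, Finset.sum_insert hx, Sc_add, ih]

lemma Sc_mul (f g : Lam n) : Sc (f * g) = Sc f * Sc g := by
  induction f using AddMonoidAlgebra.induction_linear with
  | zero => rw [zero_mul, Sc_zero]; simp [Sc_zero]
  | add f f' hf hf' => rw [add_mul, Sc_add, hf, hf', Sc_add, add_mul]
  | single d b =>
      rw [Sc_single]
      unfold Sc
      have : ∀ e : ZMod n, (AddMonoidAlgebra.single d b * g) e = b * g (-d + e) :=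
        fun e => AddMonoidAlgebra.coeff_single_mul_apply g b d e
      rw [Finset.sum_congr rfl fun e _ => this e, ← Finset.mul_sum]
      congr 1
      exact Fintype.sum_equiv (Equiv.addLeft (-d)) _ _ fun e => rfl

lemma Sc_conj (f : Lam n) : Sc (conj n f) = Sc f := by
  unfold Sc
  rw [Fintype.sum_equiv (Equiv.neg (ZMod n)) _ (fun d => f d) fun d => by
    rw [conj_apply]; rfl]

lemma Nn_apply (d : ZMod n) : Nn n d = 1 := by
  unfold Nn
  rw [AddMonoidAlgebra.coeff_sum, Finsupp.finset_sum_apply]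
  rw [Finset.sum_eq_single d.val]
  · rw [ZMod.natCast_val, ZMod.cast_id]; exact Finsupp.single_eq_same
  · intro e he hne
    apply Finsupp.single_eq_of_ne'
    intro hcast
    exact hne (by rw [← hcast, ZMod.val_cast_of_lt (Finset.mem_range.mp he)])
  · intro hd
    exact absurd (Finset.mem_range.mpr (ZMod.val_lt d)) hd

lemma Bil_Nn_left (g : Lam n) : Bil (Nn n) g = Sc g := by
  unfold Bil Sc
  exact Finset.sum_congr rfl fun d _ => by rw [Nn_apply, one_mul]

lemma Sc_Nn : Sc (Nn n) = (n : ℤ) := by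
  unfold Sc
  rw [Finset.sum_congr rfl fun d _ => Nn_apply d, Finset.sum_const, Finset.card_univ,
    ZMod.card, nsmul_eq_mul, mul_one]

lemma mul_Nn_zero (f : Lam n) : (f * Nn n) 0 = Sc f := by
  rw [show f = conj n (conj n f) from (conj_conj n f).symm, bil_eq, Bil_comm,
    Bil_Nn_left, Sc_conj, conj_conj]

lemma two_def : (2 : Lam n) = AddMonoidAlgebra.single 0 2 := by
  rw [show (2 : Lam n) = 1 + 1 from one_add_one_eq_two.symm, AddMonoidAlgebra.one_def,
    ← AddMonoidAlgebra.single_add]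
  norm_num

lemma one_apply_zero : (1 : Lam n) 0 = 1 := by
  rw [AddMonoidAlgebra.one_def]; exact Finsupp.single_eq_same

end Sc

section LnAlem
variable {n} (a : Lam n)

lemma LnA_eq (v w : Fin 4 → Lam n) :
    LnA n a v w = ∑ i, ∑ j, Bil (v i) (LmatA n a i j * w j) := by
  unfold LnA hermA
  rw [AddMonoidAlgebra.coeff_sum, Finsupp.finset_sum_apply]
  refine Finset.sum_congr rfl fun i _ => ?_
  rw [AddMonoidAlgebra.coeff_sum, Finsupp.finset_sum_apply]
  refine Finset.sum_congr rfl fun j _ => ?_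
  rw [mul_assoc, bil_eq]

lemma Lsymm : ∀ i j, LmatA n a i j = LmatA n a j i := by
  intro i j
  fin_cases i <;> fin_cases j <;> simp [LmatA]

variable (hconj : conj n a = a)
include hconj

lemma conj_L : ∀ i j, conj n (LmatA n a i j) = LmatA n a i j := by
  intro i j
  have h2 : conj n (2 : Lam n) = 2 := by
    rw [show (2 : Lam n) = 1 + 1 from one_add_one_eq_two.symm, conj_add, conj_one]
  have hsq : conj n (a ^ 2) = a ^ 2 := by
    rw [sq, conj_mul, hconj]
  fin_cases i <;> fin_cases j <;>
    simp [LmatA, conj_add, conj_one, conj_zero, hconj, hsq, h2]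

lemma LnA_comm (v w : Fin 4 → Lam n) : LnA n a v w = LnA n a w v := by
  rw [LnA_eq, LnA_eq, Finset.sum_comm]
  refine Finset.sum_congr rfl fun j _ => Finset.sum_congr rfl fun i _ => ?_
  calc Bil (v i) (LmatA n a i j * w j)
      = Bil (conj n (LmatA n a i j) * v i) (w j) := Bil_mul_right _ _ _
    _ = Bil (LmatA n a i j * v i) (w j) := by rw [conj_L a hconj]
    _ = Bil (w j) (LmatA n a i j * v i) := Bil_comm _ _
    _ = Bil (w j) (LmatA n a j i * v i) := by rw [Lsymm a i j]

end LnAlem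

section Lin
variable {n} (a : Lam n)

lemma LnA_add_right (v w w' : Fin 4 → Lam n) :
    LnA n a v (w + w') = LnA n a v w + LnA n a v w' := by
  rw [LnA_eq, LnA_eq, LnA_eq, ← Finset.sum_add_distrib]
  refine Finset.sum_congr rfl fun i _ => ?_
  rw [← Finset.sum_add_distrib]
  refine Finset.sum_congr rfl fun j _ => ?_
  rw [Pi.add_apply, mul_add, Bil_add_right]

lemma LnA_smul_right (z : ℤ) (v w : Fin 4 → Lam n) :
    LnA n a v (z • w) = z * LnA n a v w := by
  rw [LnA_eq, LnA_eq, Finset.mul_sum]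
  refine Finset.sum_congr rfl fun i _ => ?_
  rw [Finset.mul_sum]
  refine Finset.sum_congr rfl fun j _ => ?_
  rw [Pi.smul_apply, mul_smul_comm, Bil_smul_right]

lemma LnA_add_left (v v' w : Fin 4 → Lam n) :
    LnA n a (v + v') w = LnA n a v w + LnA n a v' w := by
  rw [LnA_eq, LnA_eq, LnA_eq, ← Finset.sum_add_distrib]
  refine Finset.sum_congr rfl fun i _ => ?_
  rw [← Finset.sum_add_distrib]
  refine Finset.sum_congr rfl fun j _ => ?_
  rw [Pi.add_apply, Bil_add_left]

lemma LnA_smul_left (z : ℤ) (v w : Fin 4 → Lam n) :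
    LnA n a (z • v) w = z * LnA n a v w := by
  rw [LnA_eq, LnA_eq, Finset.mul_sum]
  refine Finset.sum_congr rfl fun i _ => ?_
  rw [Finset.mul_sum]
  refine Finset.sum_congr rfl fun j _ => ?_
  rw [Pi.smul_apply, Bil_smul_left]

/-- `LnA` in the second argument, as a `ℤ`-linear map. -/
def LnAr (v : Fin 4 → Lam n) : (Fin 4 → Lam n) →ₗ[ℤ] ℤ where
  toFun w := LnA n a v w
  map_add' w w' := LnA_add_right a v w w'
  map_smul' z w := by
    simp only [RingHom.id_apply, smul_eq_mul]
    exact LnA_smul_right a z v w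

end Lin

/-- Extensionality on the canonical basis of `Λₙ⁴`. -/
lemma ext_basis {n : ℕ} [NeZero n] {M : Type*} [AddCommGroup M] [Module ℤ M]
    (F G : (Fin 4 → Lam n) →ₗ[ℤ] M)
    (h : ∀ (j : Fin 4) (d : ZMod n),
      F (Pi.single j (AddMonoidAlgebra.single d 1)) =
      G (Pi.single j (AddMonoidAlgebra.single d 1))) : F = G := by
  refine LinearMap.ext fun w => ?_
  have hw : w = ∑ j, Pi.single j (w j) := by
    funext k
    rw [Finset.sum_apply]
    simp [Pi.single_apply]
  rw [hw, map_sum, map_sum]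
  refine Finset.sum_congr rfl fun j _ => ?_
  generalize w j = g
  induction g using AddMonoidAlgebra.induction_linear with
  | zero =>
      have : (Pi.single j (0 : Lam n) : Fin 4 → Lam n) = 0 := Pi.single_zero j
      rw [this, map_zero, map_zero]
  | add f f' hf hf' =>
      have : (Pi.single j (f + f') : Fin 4 → Lam n)
          = Pi.single j f + Pi.single j f' := by
        funext k
        by_cases hk : k = j <;> simp [Pi.single_apply, hk]
      rw [this, map_add, map_add, hf, hf']
  | single d b =>
      have hb : (AddMonoidAlgebra.single d b : Lam n)
          = b • AddMonoidAlgebra.single d 1 := by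
        rw [AddMonoidAlgebra.smul_single, smul_eq_mul, mul_one]
      have : (Pi.single j (AddMonoidAlgebra.single d b) : Fin 4 → Lam n)
          = b • Pi.single j (AddMonoidAlgebra.single d 1) := by
        funext k
        by_cases hk : k = j
        · subst hk
          rw [Pi.smul_apply, Pi.single_eq_same, Pi.single_eq_same, hb]
        · rw [Pi.smul_apply, Pi.single_eq_of_ne hk, Pi.single_eq_of_ne hk, smul_zero]
      rw [this, F.map_smul, G.map_smul, h j d]

section Nondeg
variable {n} (a : Lam n)

lemma LnA_basis (v : Fin 4 → Lam n) (j : Fin 4) (d : ZMod n) :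
    LnA n a v (Pi.single j (AddMonoidAlgebra.single d 1)) =
      (∑ i, conj n (v i) * LmatA n a i j) (-d) := by
  have step1 : ∀ i : Fin 4,
      (∑ j', Bil (v i) (LmatA n a i j' *
        (Pi.single j (AddMonoidAlgebra.single d 1) : Fin 4 → Lam n) j'))
      = (conj n (v i) * LmatA n a i j) (-d) := by
    intro i
    rw [Finset.sum_eq_single j]
    · rw [Pi.single_eq_same, ← bil_eq, ← mul_assoc, AddMonoidAlgebra.coeff_mul_single_apply,
        zero_add, mul_one]
    · intro j' _ hj'
      rw [Pi.single_eq_of_ne hj', mul_zero, Bil_zero_right]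
    · simp
  rw [LnA_eq, Finset.sum_congr rfl fun i _ => step1 i, ← Finsupp.finset_sum_apply, ← AddMonoidAlgebra.coeff_sum]

lemma detL : (LmatA n a).det = 1 := by
  rw [LmatA, Matrix.det_succ_row_zero]
  simp [Fin.sum_univ_succ, Matrix.det_fin_three, Fin.succAbove]
  ring

lemma LK_eq : ∀ i k : Fin 4, (∑ j, LmatA n a i j * (LmatA n a).adjugate j k)
    = if i = k then 1 else 0 := by
  intro i k
  have h := Matrix.mul_adjugate (LmatA n a)
  rw [detL, one_smul] at h
  calc (∑ j, LmatA n a i j * (LmatA n a).adjugate j k)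
      = (LmatA n a * (LmatA n a).adjugate) i k := (Matrix.mul_apply).symm
    _ = (1 : Matrix (Fin 4) (Fin 4) (Lam n)) i k := by rw [h]
    _ = if i = k then 1 else 0 := Matrix.one_apply

lemma KL_eq : ∀ i k : Fin 4, (∑ j, (LmatA n a).adjugate i j * LmatA n a j k)
    = if i = k then 1 else 0 := by
  intro i k
  have h := Matrix.adjugate_mul (LmatA n a)
  rw [detL, one_smul] at h
  calc (∑ j, (LmatA n a).adjugate i j * LmatA n a j k)
      = ((LmatA n a).adjugate * LmatA n a) i k := (Matrix.mul_apply).symm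
    _ = (1 : Matrix (Fin 4) (Fin 4) (Lam n)) i k := by rw [h]
    _ = if i = k then 1 else 0 := Matrix.one_apply

lemma nondeg (v : Fin 4 → Lam n) (H : ∀ w, LnA n a v w = 0) : v = 0 := by
  set u : Fin 4 → Lam n := fun i => conj n (v i) with hu
  have hg : ∀ j : Fin 4, (∑ i, u i * LmatA n a i j) = 0 := by
    intro j
    ext e
    have h1 := H (Pi.single j (AddMonoidAlgebra.single (-e) 1))
    rw [LnA_basis] at h1
    rw [neg_neg] at h1
    simpa using h1
  have hu0 : ∀ k, u k = 0 := by
    intro k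
    have : u k = ∑ j, (∑ i, u i * LmatA n a i j) * (LmatA n a).adjugate j k := by
      rw [Finset.sum_congr rfl fun j (_ : j ∈ Finset.univ) => Finset.sum_mul _ _ _]
      rw [Finset.sum_comm]
      calc u k = ∑ i, u i * (if i = k then 1 else 0) := by
            rw [Finset.sum_eq_single k]
            · simp
            · intro i _ hik; simp [hik]
            · simp
        _ = ∑ i, u i * (∑ j, LmatA n a i j * (LmatA n a).adjugate j k) := by
            refine Finset.sum_congr rfl fun i _ => ?_
            rw [LK_eq]
        _ = ∑ i, ∑ j, u i * LmatA n a i j * (LmatA n a).adjugate j k := by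
            refine Finset.sum_congr rfl fun i _ => ?_
            rw [Finset.mul_sum]
            exact Finset.sum_congr rfl fun j _ => (mul_assoc _ _ _).symm
    rw [this, Finset.sum_congr rfl fun j (_ : j ∈ Finset.univ) => by rw [hg j]]
    simp
  funext k
  have : conj n (u k) = conj n 0 := by rw [hu0 k]
  rw [hu, conj_conj, conj_zero] at this
  simpa using this

lemma unimodular (f : (Fin 4 → Lam n) →ₗ[ℤ] ℤ) :
    ∃! v : Fin 4 → Lam n, ∀ w, LnA n a v w = f w := by
  classical
  set K := (LmatA n a).adjugate with hK
  set h : Fin 4 → Lam n := fun j =>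
    AddMonoidAlgebra.ofCoeff (Finsupp.equivFunOnFinite.symm (fun e => f (Pi.single j (AddMonoidAlgebra.single (-e) 1))))
    with hh
  have h_apply : ∀ j e, h j e = f (Pi.single j (AddMonoidAlgebra.single (-e) 1)) := by
    intro j e; rw [hh]; rfl
  set v : Fin 4 → Lam n := fun i => conj n (∑ kk, h kk * K kk i) with hv
  have hvf : ∀ w, LnA n a v w = f w := by
    have key : ∀ (j : Fin 4) (d : ZMod n),
        LnA n a v (Pi.single j (AddMonoidAlgebra.single d 1)) =
        f (Pi.single j (AddMonoidAlgebra.single d 1)) := by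
      intro j d
      rw [LnA_basis]
      have hci : ∀ i, conj n (v i) = ∑ kk, h kk * K kk i := fun i => by
        rw [hv]; exact conj_conj n _
      rw [Finset.sum_congr rfl fun i (_ : i ∈ Finset.univ) => by rw [hci i]]
      have : (∑ i, (∑ kk, h kk * K kk i) * LmatA n a i j) = h j := by
        rw [Finset.sum_congr rfl fun i (_ : i ∈ Finset.univ) => Finset.sum_mul _ _ _]
        rw [Finset.sum_comm]
        calc (∑ kk, ∑ i, h kk * K kk i * LmatA n a i j)
            = ∑ kk, h kk * (∑ i, K kk i * LmatA n a i j) := by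
              refine Finset.sum_congr rfl fun kk _ => ?_
              rw [Finset.mul_sum]
              exact Finset.sum_congr rfl fun i _ => mul_assoc _ _ _
          _ = ∑ kk, h kk * (if kk = j then 1 else 0) := by
              refine Finset.sum_congr rfl fun kk _ => ?_
              rw [KL_eq]
          _ = h j := by
              rw [Finset.sum_eq_single j]
              · simp
              · intro kk _ hkk; simp [hkk]
              · simp
      rw [this, h_apply, neg_neg]
    have heq := ext_basis (LnAr a v) f (fun j d => key j d)
    intro w
    exact congrFun (congrArg (fun (F : (Fin 4 → Lam n) →ₗ[ℤ] ℤ) =>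
      (F : (Fin 4 → Lam n) → ℤ)) heq) w
  refine ⟨v, hvf, ?_⟩
  intro v' hv'
  have hdiff : ∀ w, LnA n a (v' + (-1 : ℤ) • v) w = 0 := by
    intro w
    rw [LnA_add_left, LnA_smul_left, hv' w, hvf w]
    ring
  have h0 := nondeg a _ hdiff
  have : v' = v' + (-1 : ℤ) • v + v := by
    funext k; simp
  rw [this, h0]
  funext k; simp

end Nondeg

section Pos
variable {n} (a : Lam n)

def Cmat : Matrix (Fin 4) (Fin 4) (Lam n) :=
  !![1 + a, a, 1, 1;
     a, 1 + a, 1, 1;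
     1, 0, 1, -1;
     0, 1, -1, 1]

variable (hconj : conj n a = a)
include hconj

lemma conj_C : ∀ k i, conj n (Cmat a k i) = Cmat a k i := by
  intro k i
  fin_cases k <;> fin_cases i <;>
    simp [Cmat, conj_add, conj_one, conj_zero, conj_neg, hconj]

lemma hCC : ∀ i j, (∑ k, Cmat a k i * Cmat a k j) = 2 * LmatA n a i j := by
  intro i j
  fin_cases i <;> fin_cases j <;>
    simp [Cmat, LmatA, Fin.sum_univ_four] <;>
    ring

lemma factor_id (v w : Fin 4 → Lam n) :
    2 * LnA n a v w =
      ∑ k, Bil (∑ i, Cmat a k i * v i) (∑ j, Cmat a k j * w j) := by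
  have term : ∀ k i j, Bil (Cmat a k i * v i) (Cmat a k j * w j)
      = Bil (v i) (Cmat a k i * Cmat a k j * w j) := by
    intro k i j
    rw [Bil_mul_left, conj_C a hconj, mul_assoc]
  refine Eq.symm ?_
  calc (∑ k, Bil (∑ i, Cmat a k i * v i) (∑ j, Cmat a k j * w j))
      = ∑ k, ∑ i, ∑ j, Bil (Cmat a k i * v i) (Cmat a k j * w j) := by
        refine Finset.sum_congr rfl fun k _ => ?_
        rw [Bil_sum_left]
        exact Finset.sum_congr rfl fun i _ => Bil_sum_right _ _ _
    _ = ∑ i, ∑ j, ∑ k, Bil (v i) (Cmat a k i * Cmat a k j * w j) := by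
        rw [Finset.sum_comm]
        refine Finset.sum_congr rfl fun i _ => ?_
        rw [Finset.sum_comm]
        exact Finset.sum_congr rfl fun j _ =>
          Finset.sum_congr rfl fun k _ => term k i j
    _ = ∑ i, ∑ j, Bil (v i) ((2 * LmatA n a i j) * w j) := by
        refine Finset.sum_congr rfl fun i _ =>
          Finset.sum_congr rfl fun j _ => ?_
        rw [← hCC a hconj i j, Finset.sum_mul, Bil_sum_right]
    _ = ∑ i, ∑ j, 2 * Bil (v i) (LmatA n a i j * w j) := by
        refine Finset.sum_congr rfl fun i _ =>
          Finset.sum_congr rfl fun j _ => ?_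
        rw [show (2 : Lam n) * LmatA n a i j * w j
            = LmatA n a i j * w j + LmatA n a i j * w j by ring, Bil_add_right]
        ring
    _ = 2 * LnA n a v w := by
        rw [LnA_eq, Finset.mul_sum]
        exact Finset.sum_congr rfl fun i _ => by rw [Finset.mul_sum]

lemma LnA_self_nonneg (v : Fin 4 → Lam n) : 0 ≤ LnA n a v v := by
  have h := factor_id a hconj v v
  have hnn : 0 ≤ ∑ k, Bil (∑ i, Cmat a k i * v i) (∑ j, Cmat a k j * v j) :=
    Finset.sum_nonneg fun k _ => Bil_self_nonneg _
  linarith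

lemma pos_def (v : Fin 4 → Lam n) (hv : v ≠ 0) : 0 < LnA n a v v := by
  rcases lt_or_eq_of_le (LnA_self_nonneg a hconj v) with h | h
  · exact h
  exfalso
  apply hv
  -- each square term vanishes
  have h2 := factor_id a hconj v v
  rw [← h, mul_zero] at h2
  have hz := (Finset.sum_eq_zero_iff_of_nonneg
    (fun k (_ : k ∈ Finset.univ) => Bil_self_nonneg
      (∑ i, Cmat a k i * v i))).mp h2.symm
  have hPk : ∀ k, (∑ i, Cmat a k i * v i) = 0 := fun k =>
    Bil_self_eq_zero (hz k (Finset.mem_univ k))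
  apply nondeg a
  intro w
  have h3 := factor_id a hconj v w
  rw [Finset.sum_congr rfl fun k (_ : k ∈ Finset.univ) => by
    rw [hPk k, Bil_zero_left]] at h3
  simp at h3
  linarith [h3]

end Pos

section W1
variable {n} (a : Lam n)

lemma neg_two_def : (-2 : Lam n) = AddMonoidAlgebra.single 0 (-2) := by
  rw [show (-2 : Lam n) = -(2 : Lam n) by ring, two_def, AddMonoidAlgebra.single_neg]

lemma Bil_neg_two (g : Lam n) : Bil (-2 : Lam n) g = -2 * g 0 := by
  rw [neg_two_def, Bil_single_left]

lemma Sc_neg_two : Sc (-2 : Lam n) = -2 := by rw [neg_two_def, Sc_single]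

lemma two_apply_zero : (2 : Lam n) 0 = 2 := by
  rw [two_def]; exact Finsupp.single_eq_same

lemma Sc_two : Sc (2 : Lam n) = 2 := by rw [two_def, Sc_single]

lemma mul_neg_two_zero (f : Lam n) : (f * (-2) : Lam n) 0 = -2 * f 0 := by
  rw [neg_two_def, AddMonoidAlgebra.coeff_mul_single_apply, neg_zero, add_zero]
  ring

lemma LnA_w1 (w₁ u : Fin 4 → Lam n) (h0 : w₁ 0 = -2) (h1 : w₁ 1 = 0)
    (h2 : w₁ 2 = Nn n) (h3 : w₁ 3 = Nn n) :
    LnA n a w₁ u =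
      -2 * ((LmatA n a 0 0 * u 0) 0 + (LmatA n a 0 1 * u 1) 0
          + (LmatA n a 0 2 * u 2) 0 + (LmatA n a 0 3 * u 3) 0)
      + (Sc (LmatA n a 2 0 * u 0) + Sc (LmatA n a 2 1 * u 1)
          + Sc (LmatA n a 2 2 * u 2) + Sc (LmatA n a 2 3 * u 3))
      + (Sc (LmatA n a 3 0 * u 0) + Sc (LmatA n a 3 1 * u 1)
          + Sc (LmatA n a 3 2 * u 2) + Sc (LmatA n a 3 3 * u 3)) := by
  rw [LnA_eq, Fin.sum_univ_four]
  rw [Fin.sum_univ_four, Fin.sum_univ_four, Fin.sum_univ_four, Fin.sum_univ_four]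
  rw [h0, h1, h2, h3]
  rw [Bil_zero_left, Bil_zero_left, Bil_zero_left, Bil_zero_left]
  rw [Bil_neg_two, Bil_neg_two, Bil_neg_two, Bil_neg_two]
  rw [Bil_Nn_left, Bil_Nn_left, Bil_Nn_left, Bil_Nn_left,
    Bil_Nn_left, Bil_Nn_left, Bil_Nn_left, Bil_Nn_left]
  ring

lemma LnA_diag_basis (j : Fin 4) (d : ZMod n) :
    LnA n a (Pi.single j (AddMonoidAlgebra.single d 1))
      (Pi.single j (AddMonoidAlgebra.single d 1)) = LmatA n a j j 0 := by
  rw [LnA_eq]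
  rw [Finset.sum_eq_single j]
  · rw [Finset.sum_eq_single j]
    · rw [Pi.single_eq_same, Bil_single_left,
        AddMonoidAlgebra.coeff_mul_single_apply, add_neg_cancel, mul_one, one_mul]
    · intro j' _ hj'
      rw [Pi.single_eq_of_ne hj', mul_zero, Bil_zero_right]
    · simp
  · intro i _ hi
    rw [Pi.single_eq_of_ne hi]
    refine Finset.sum_eq_zero fun j' _ => Bil_zero_left _
  · simp

end W1

section SpecA
variable {n} (m : ℕ) (c : ℕ → ℤ) (hn : 4 * m < n) (a : Lam n)
variable (ha : a = c 0 • (1 : Lam n)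
  + ∑ ℓ ∈ Finset.Icc 1 m, c ℓ • (Xp n (ℓ : ℤ) + Xp n (-(ℓ : ℤ))))

lemma hXp1 (ℓ : ℕ) : Xp n (ℓ : ℤ) = AddMonoidAlgebra.single ((ℓ : ZMod n)) 1 := by
  unfold Xp; norm_cast

lemma hXp2 (ℓ : ℕ) : Xp n (-(ℓ : ℤ)) = AddMonoidAlgebra.single (-(ℓ : ZMod n)) 1 := by
  unfold Xp
  congr 1
  push_cast
  ring

include hn

lemma cast_ne (ℓ : ℕ) (hℓ : ℓ ∈ Finset.Icc 1 m) : ((ℓ : ZMod n)) ≠ 0 := by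
  obtain ⟨hℓ1, hℓ2⟩ := Finset.mem_Icc.mp hℓ
  intro h
  have := (ZMod.natCast_eq_zero_iff ℓ n).mp h
  have := Nat.le_of_dvd (by omega) this
  omega

lemma cast_inj (ℓ ℓ' : ℕ) (hℓ : ℓ ∈ Finset.Icc 1 m) (hℓ' : ℓ' ∈ Finset.Icc 1 m)
    (h : ((ℓ : ZMod n)) = (ℓ' : ZMod n)) : ℓ = ℓ' := by
  obtain ⟨h1, h2⟩ := Finset.mem_Icc.mp hℓ
  obtain ⟨h1', h2'⟩ := Finset.mem_Icc.mp hℓ'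
  have hmod := (ZMod.natCast_eq_natCast_iff ℓ ℓ' n).mp h
  unfold Nat.ModEq at hmod
  rwa [Nat.mod_eq_of_lt (by omega), Nat.mod_eq_of_lt (by omega)] at hmod

lemma cast_ne_neg (ℓ ℓ' : ℕ) (hℓ : ℓ ∈ Finset.Icc 1 m) (hℓ' : ℓ' ∈ Finset.Icc 1 m) :
    ((ℓ : ZMod n)) ≠ -((ℓ' : ZMod n)) := by
  obtain ⟨h1, h2⟩ := Finset.mem_Icc.mp hℓ
  obtain ⟨h1', h2'⟩ := Finset.mem_Icc.mp hℓ'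
  intro h
  have hadd : ((ℓ + ℓ' : ℕ) : ZMod n) = 0 := by
    push_cast
    rw [h]
    ring
  have := (ZMod.natCast_eq_zero_iff (ℓ + ℓ') n).mp hadd
  have := Nat.le_of_dvd (by omega) this
  omega

include ha

lemma a_apply (e : ZMod n) : a e =
    c 0 * (if (0 : ZMod n) = e then 1 else 0) +
    ∑ ℓ ∈ Finset.Icc 1 m, c ℓ *
      ((if ((ℓ : ZMod n)) = e then 1 else 0) + (if (-(ℓ : ZMod n)) = e then 1 else 0)) := by
  rw [ha, AddMonoidAlgebra.coeff_add, Finsupp.add_apply, AddMonoidAlgebra.coeff_smul,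
    Finsupp.smul_apply, AddMonoidAlgebra.coeff_sum, Finsupp.finset_sum_apply,
    AddMonoidAlgebra.one_def, AddMonoidAlgebra.coeff_single, Finsupp.single_apply, smul_eq_mul]
  congr 1
  refine Finset.sum_congr rfl fun ℓ _ => ?_
  rw [hXp1, hXp2, AddMonoidAlgebra.coeff_smul, Finsupp.smul_apply, AddMonoidAlgebra.coeff_add,
    Finsupp.add_apply, AddMonoidAlgebra.coeff_single, AddMonoidAlgebra.coeff_single,
    Finsupp.single_apply, Finsupp.single_apply, smul_eq_mul]

lemma a_zero : a 0 = c 0 := by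
  rw [a_apply m c hn a ha 0, if_pos rfl, Finset.sum_eq_zero, mul_one, add_zero]
  intro ℓ hℓ
  rw [if_neg (cast_ne m hn ℓ hℓ),
    if_neg (fun h => cast_ne m hn ℓ hℓ (neg_eq_zero.mp h))]
  ring

lemma a_pos (ℓ₀ : ℕ) (hℓ₀ : ℓ₀ ∈ Finset.Icc 1 m) : a ((ℓ₀ : ZMod n)) = c ℓ₀ := by
  rw [a_apply m c hn a ha]
  rw [if_neg (fun h => cast_ne m hn ℓ₀ hℓ₀ h.symm), mul_zero, zero_add]
  rw [Finset.sum_eq_single ℓ₀]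
  · rw [if_pos rfl, if_neg (fun h => cast_ne_neg m hn ℓ₀ ℓ₀ hℓ₀ hℓ₀ h.symm)]
    ring
  · intro ℓ hℓ hne
    rw [if_neg (fun h => hne (cast_inj m hn ℓ ℓ₀ hℓ hℓ₀ h)),
      if_neg (fun h => cast_ne_neg m hn ℓ₀ ℓ hℓ₀ hℓ h.symm)]
    ring
  · exact fun h => absurd hℓ₀ h

lemma a_neg (ℓ₀ : ℕ) (hℓ₀ : ℓ₀ ∈ Finset.Icc 1 m) : a (-(ℓ₀ : ZMod n)) = c ℓ₀ := by
  rw [a_apply m c hn a ha]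
  rw [if_neg (fun h => cast_ne m hn ℓ₀ hℓ₀ (neg_eq_zero.mp h.symm)), mul_zero, zero_add]
  rw [Finset.sum_eq_single ℓ₀]
  · rw [if_pos rfl, if_neg (fun h => cast_ne_neg m hn ℓ₀ ℓ₀ hℓ₀ hℓ₀ h)]
    ring
  · intro ℓ hℓ hne
    rw [if_neg (fun h => hne (cast_inj m hn ℓ ℓ₀ hℓ hℓ₀ (neg_injective h))),
      if_neg (fun h => cast_ne_neg m hn ℓ ℓ₀ hℓ hℓ₀ h)]
    ring
  · exact fun h => absurd hℓ₀ h

lemma hconj_a : conj n a = a := by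
  rw [ha, conj_add, conj_smul, conj_one, conj_sum]
  congr 1
  refine Finset.sum_congr rfl fun ℓ _ => ?_
  rw [conj_smul, conj_add, hXp1, hXp2, conj_single, conj_single, neg_neg, add_comm]

lemma Sc_a : Sc a = c 0 + 2 * ∑ ℓ ∈ Finset.Icc 1 m, c ℓ := by
  rw [ha, Sc_add, Sc_smul, Sc_one, Sc_sum, mul_one]
  have hterm : ∀ ℓ ∈ Finset.Icc 1 m,
      Sc (c ℓ • (Xp n (ℓ : ℤ) + Xp n (-(ℓ : ℤ)))) = 2 * c ℓ := by
    intro ℓ _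
    rw [Sc_smul, Sc_add, hXp1, hXp2, Sc_single, Sc_single]
    ring
  rw [Finset.sum_congr rfl hterm, ← Finset.mul_sum]

lemma Bil_a_a : Bil a a = c 0 ^ 2 + 2 * ∑ ℓ ∈ Finset.Icc 1 m, c ℓ ^ 2 := by
  have expand : ∀ g : Lam n, Bil a g = c 0 * g 0 +
      ∑ ℓ ∈ Finset.Icc 1 m, c ℓ * (g ((ℓ : ZMod n)) + g (-(ℓ : ZMod n))) := by
    intro g
    conv_lhs => rw [ha]
    rw [Bil_add_left, Bil_smul_left, AddMonoidAlgebra.one_def, Bil_single_left,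
      Bil_sum_left, one_mul]
    have hterm2 : ∀ ℓ ∈ Finset.Icc 1 m,
        Bil (c ℓ • (Xp n (ℓ : ℤ) + Xp n (-(ℓ : ℤ)))) g
          = c ℓ * (g ((ℓ : ZMod n)) + g (-(ℓ : ZMod n))) := by
      intro ℓ _
      rw [Bil_smul_left, Bil_add_left, hXp1, hXp2, Bil_single_left, Bil_single_left]
      ring
    rw [Finset.sum_congr rfl hterm2]
  rw [expand a, a_zero m c hn a ha]
  have hterm : ∀ ℓ ∈ Finset.Icc 1 m,
      c ℓ * (a ((ℓ : ZMod n)) + a (-(ℓ : ZMod n))) = 2 * c ℓ ^ 2 := by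
    intro ℓ hℓ
    rw [a_pos m c hn a ha ℓ hℓ, a_neg m c hn a ha ℓ hℓ]
    ring
  rw [Finset.sum_congr rfl hterm, ← Finset.mul_sum]
  ring

lemma aa_zero : (a * a) 0 = Bil a a := by
  conv_lhs => rw [show a * a = conj n a * a by rw [hconj_a m c hn a ha]]
  rw [bil_eq]

lemma L_entries :
    LmatA n a 0 0 = 1 + a + a ^ 2 ∧ LmatA n a 0 1 = a + a ^ 2 ∧
    LmatA n a 0 2 = 1 + a ∧ LmatA n a 0 3 = a ∧
    LmatA n a 2 0 = 1 + a ∧ LmatA n a 2 1 = a ∧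
    LmatA n a 2 2 = 2 ∧ LmatA n a 2 3 = 0 ∧
    LmatA n a 3 0 = a ∧ LmatA n a 3 1 = 1 + a ∧
    LmatA n a 3 2 = 0 ∧ LmatA n a 3 3 = 2 ∧
    LmatA n a 1 1 = 1 + a + a ^ 2 := by
  refine ⟨?_, ?_, ?_, ?_, ?_, ?_, ?_, ?_, ?_, ?_, ?_, ?_, ?_⟩ <;> simp [LmatA]

include hn ha

lemma L00_zero : (LmatA n a 0 0) 0 = 1 + c 0 + (c 0 ^ 2 + 2 * ∑ ℓ ∈ Finset.Icc 1 m, c ℓ ^ 2) := by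
  rw [(L_entries m c hn a ha).1, AddMonoidAlgebra.coeff_add, AddMonoidAlgebra.coeff_add,
    Finsupp.add_apply, Finsupp.add_apply, one_apply_zero,
    a_zero m c hn a ha, sq, aa_zero m c hn a ha, Bil_a_a m c hn a ha]

lemma L11_zero : (LmatA n a 1 1) 0 = 1 + c 0 + (c 0 ^ 2 + 2 * ∑ ℓ ∈ Finset.Icc 1 m, c ℓ ^ 2) := by
  rw [(L_entries m c hn a ha).2.2.2.2.2.2.2.2.2.2.2.2, AddMonoidAlgebra.coeff_add,
    AddMonoidAlgebra.coeff_add, Finsupp.add_apply, Finsupp.add_apply,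
    one_apply_zero, a_zero m c hn a ha, sq, aa_zero m c hn a ha, Bil_a_a m c hn a ha]

lemma Sc_one_a : Sc ((1 : Lam n) + a) = 1 + (c 0 + 2 * ∑ ℓ ∈ Finset.Icc 1 m, c ℓ) := by
  rw [Sc_add, Sc_one, Sc_a m c hn a ha]

lemma norm_w1 (w₁ : Fin 4 → Lam n) (h0 : w₁ 0 = -2) (h1 : w₁ 1 = 0)
    (h2 : w₁ 2 = Nn n) (h3 : w₁ 3 = Nn n) :
    LnA n a w₁ w₁ = 4 * n - 4 * ((1 + 2 * c 0 + 4 * ∑ ℓ ∈ Finset.Icc 1 m, c ℓ)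
      - (1 + c 0 + c 0 ^ 2 + 2 * ∑ ℓ ∈ Finset.Icc 1 m, c ℓ ^ 2)) := by
  obtain ⟨e00, e01, e02, e03, e20, e21, e22, e23, e30, e31, e32, e33, e11⟩ :=
    L_entries m c hn a ha
  rw [LnA_w1 a w₁ w₁ h0 h1 h2 h3, h0, h1, h2, h3]
  rw [mul_neg_two_zero, mul_zero, mul_Nn_zero, mul_Nn_zero]
  rw [Sc_mul, Sc_mul, Sc_mul, Sc_mul, Sc_mul, Sc_mul, Sc_mul, Sc_mul]
  rw [Sc_neg_two, Sc_zero, Sc_Nn]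
  rw [L00_zero m c hn a ha]
  rw [e02, e03, e20, e21, e22, e23, e30, e31, e32, e33]
  rw [Sc_one_a m c hn a ha, Sc_a m c hn a ha, Sc_two, Sc_zero]
  simp only [AddMonoidAlgebra.coeff_zero, Finsupp.coe_zero, Pi.zero_apply]
  push_cast
  ring

set_option maxHeartbeats 1000000 in
lemma char_w1 (hconj : conj n a = a) (w₁ : Fin 4 → Lam n) (h0 : w₁ 0 = -2) (h1 : w₁ 1 = 0)
    (h2 : w₁ 2 = Nn n) (h3 : w₁ 3 = Nn n) :
    ∀ v : Fin 4 → Lam n, (2 : ℤ) ∣ LnA n a w₁ v - LnA n a v v := by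
  have hsq : ∀ t : ZMod 2, t * t = t := by decide
  have h2z : ((2 : ℤ) : ZMod 2) = 0 := by decide
  set F : (Fin 4 → Lam n) →ₗ[ℤ] ZMod 2 :=
    { toFun := fun v => ((LnA n a w₁ v - LnA n a v v : ℤ) : ZMod 2)
      map_add' := by
        intro v w
        have hint : LnA n a w₁ (v + w) - LnA n a (v + w) (v + w)
            = (LnA n a w₁ v - LnA n a v v) + (LnA n a w₁ w - LnA n a w w)
              - 2 * LnA n a v w := by
          rw [LnA_add_right, LnA_add_left, LnA_add_right, LnA_add_right,
            LnA_comm a hconj w v]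
          ring
        rw [hint]
        push_cast
        rw [show (2 : ZMod 2) = 0 from by decide]
        ring
      map_smul' := by
        intro z v
        have hint : LnA n a w₁ (z • v) - LnA n a (z • v) (z • v)
            = z * LnA n a w₁ v - z * (z * LnA n a v v) := by
          rw [LnA_smul_right, LnA_smul_left, LnA_smul_right]
        dsimp only [RingHom.id_apply]
        rw [hint, zsmul_eq_mul]
        push_cast
        rw [show ((z : ZMod 2)) * ((z : ZMod 2) * ((LnA n a v v : ℤ) : ZMod 2))
            = (z : ZMod 2) * ((LnA n a v v : ℤ) : ZMod 2) by
          rw [← mul_assoc, hsq]]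
        ring } with hF
  have hF0 : F = 0 := by
    apply ext_basis
    intro j d
    obtain ⟨e00, e01, e02, e03, e20, e21, e22, e23, e30, e31, e32, e33, e11⟩ :=
      L_entries m c hn a ha
    have hsingle1 : Sc (AddMonoidAlgebra.single d (1:ℤ)) = 1 := Sc_single d 1
    have hFb : ∀ u : Fin 4 → Lam n, F u = ((LnA n a w₁ u - LnA n a u u : ℤ) : ZMod 2) :=
      fun u => rfl
    obtain ⟨k, hk⟩ := Int.even_mul_succ_self (c 0)
    have hk2 : c 0 ^ 2 + c 0 = k + k := by linear_combination hk
    rw [hFb, LinearMap.zero_apply]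
    apply (ZMod.intCast_zmod_eq_zero_iff_dvd _ 2).mpr
    rcases (by decide : ∀ j : Fin 4, j = 0 ∨ j = 1 ∨ j = 2 ∨ j = 3) j with
      rfl | rfl | rfl | rfl
    · have hb0 : (Pi.single (0 : Fin 4) (AddMonoidAlgebra.single d (1:ℤ)) :
          Fin 4 → Lam n) 0 = AddMonoidAlgebra.single d 1 := Pi.single_eq_same _ _
      have hb1 : (Pi.single (0 : Fin 4) (AddMonoidAlgebra.single d (1:ℤ)) :
          Fin 4 → Lam n) 1 = 0 := Pi.single_eq_of_ne (by decide) _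
      have hb2 : (Pi.single (0 : Fin 4) (AddMonoidAlgebra.single d (1:ℤ)) :
          Fin 4 → Lam n) 2 = 0 := Pi.single_eq_of_ne (by decide) _
      have hb3 : (Pi.single (0 : Fin 4) (AddMonoidAlgebra.single d (1:ℤ)) :
          Fin 4 → Lam n) 3 = 0 := Pi.single_eq_of_ne (by decide) _
      rw [LnA_w1 a w₁ _ h0 h1 h2 h3, hb0, hb1, hb2, hb3, LnA_diag_basis a 0 d]
      simp only [mul_zero, AddMonoidAlgebra.coeff_zero, Finsupp.coe_zero, Pi.zero_apply, Sc_zero]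
      rw [Sc_mul, Sc_mul, hsingle1, e20, e30, Sc_one_a m c hn a ha, Sc_a m c hn a ha,
        L00_zero m c hn a ha]
      refine ⟨-((LmatA n a 0 0 * AddMonoidAlgebra.single d 1 : Lam n) 0)
        + (c 0 + 2 * ∑ ℓ ∈ Finset.Icc 1 m, c ℓ) - k - (∑ ℓ ∈ Finset.Icc 1 m, c ℓ ^ 2), ?_⟩
      push_cast
      linarith
    · have hb0 : (Pi.single (1 : Fin 4) (AddMonoidAlgebra.single d (1:ℤ)) :
          Fin 4 → Lam n) 0 = 0 := Pi.single_eq_of_ne (by decide) _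
      have hb1 : (Pi.single (1 : Fin 4) (AddMonoidAlgebra.single d (1:ℤ)) :
          Fin 4 → Lam n) 1 = AddMonoidAlgebra.single d 1 := Pi.single_eq_same _ _
      have hb2 : (Pi.single (1 : Fin 4) (AddMonoidAlgebra.single d (1:ℤ)) :
          Fin 4 → Lam n) 2 = 0 := Pi.single_eq_of_ne (by decide) _
      have hb3 : (Pi.single (1 : Fin 4) (AddMonoidAlgebra.single d (1:ℤ)) :
          Fin 4 → Lam n) 3 = 0 := Pi.single_eq_of_ne (by decide) _
      rw [LnA_w1 a w₁ _ h0 h1 h2 h3, hb0, hb1, hb2, hb3, LnA_diag_basis a 1 d]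
      simp only [mul_zero, AddMonoidAlgebra.coeff_zero, Finsupp.coe_zero, Pi.zero_apply, Sc_zero]
      rw [Sc_mul, Sc_mul, hsingle1, e21, e31, Sc_one_a m c hn a ha, Sc_a m c hn a ha,
        L11_zero m c hn a ha]
      refine ⟨-((LmatA n a 0 1 * AddMonoidAlgebra.single d 1 : Lam n) 0)
        + (c 0 + 2 * ∑ ℓ ∈ Finset.Icc 1 m, c ℓ) - k - (∑ ℓ ∈ Finset.Icc 1 m, c ℓ ^ 2), ?_⟩
      push_cast
      linarith
    · have hb0 : (Pi.single (2 : Fin 4) (AddMonoidAlgebra.single d (1:ℤ)) :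
          Fin 4 → Lam n) 0 = 0 := Pi.single_eq_of_ne (by decide) _
      have hb1 : (Pi.single (2 : Fin 4) (AddMonoidAlgebra.single d (1:ℤ)) :
          Fin 4 → Lam n) 1 = 0 := Pi.single_eq_of_ne (by decide) _
      have hb2 : (Pi.single (2 : Fin 4) (AddMonoidAlgebra.single d (1:ℤ)) :
          Fin 4 → Lam n) 2 = AddMonoidAlgebra.single d 1 := Pi.single_eq_same _ _
      have hb3 : (Pi.single (2 : Fin 4) (AddMonoidAlgebra.single d (1:ℤ)) :
          Fin 4 → Lam n) 3 = 0 := Pi.single_eq_of_ne (by decide) _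
      rw [LnA_w1 a w₁ _ h0 h1 h2 h3, hb0, hb1, hb2, hb3, LnA_diag_basis a 2 d]
      simp only [mul_zero, AddMonoidAlgebra.coeff_zero, Finsupp.coe_zero, Pi.zero_apply, Sc_zero]
      rw [Sc_mul, Sc_mul, hsingle1, e22, e32, Sc_two, Sc_zero, two_apply_zero]
      refine ⟨-((LmatA n a 0 2 * AddMonoidAlgebra.single d 1 : Lam n) 0), ?_⟩
      push_cast
      linarith
    · have hb0 : (Pi.single (3 : Fin 4) (AddMonoidAlgebra.single d (1:ℤ)) :
          Fin 4 → Lam n) 0 = 0 := Pi.single_eq_of_ne (by decide) _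
      have hb1 : (Pi.single (3 : Fin 4) (AddMonoidAlgebra.single d (1:ℤ)) :
          Fin 4 → Lam n) 1 = 0 := Pi.single_eq_of_ne (by decide) _
      have hb2 : (Pi.single (3 : Fin 4) (AddMonoidAlgebra.single d (1:ℤ)) :
          Fin 4 → Lam n) 2 = 0 := Pi.single_eq_of_ne (by decide) _
      have hb3 : (Pi.single (3 : Fin 4) (AddMonoidAlgebra.single d (1:ℤ)) :
          Fin 4 → Lam n) 3 = AddMonoidAlgebra.single d 1 := Pi.single_eq_same _ _
      rw [LnA_w1 a w₁ _ h0 h1 h2 h3, hb0, hb1, hb2, hb3, LnA_diag_basis a 3 d]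
      simp only [mul_zero, AddMonoidAlgebra.coeff_zero, Finsupp.coe_zero, Pi.zero_apply, Sc_zero]
      rw [Sc_mul, Sc_mul, hsingle1, e23, e33, Sc_two, Sc_zero, two_apply_zero]
      refine ⟨-((LmatA n a 0 3 * AddMonoidAlgebra.single d 1 : Lam n) 0), ?_⟩
      push_cast
      linarith
  intro v
  have : F v = 0 := by rw [hF0]; rfl
  have := (ZMod.intCast_zmod_eq_zero_iff_dvd _ 2).mp this
  exact_mod_cast this

end SpecA

end Aux

/-- Let `a = a₀ + Σ_{ℓ=1}^m a_ℓ(x^ℓ + x^{−ℓ})` with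
`a₀² + 2Σ a_ℓ² < a₀ + 4Σ a_ℓ`.  Then for every `n > 4m` the rank-`4n` integral
form `Lₙ(a)` is positive definite, unimodular, and not isomorphic to the standard
form: the vector `w₁ = N(e₃+e₄) − 2e₁` is characteristic of norm
`4n − 4((1 + 2a₀ + 4Σa_ℓ) − (1 + a₀ + a₀² + 2Σa_ℓ²)) < 4n`. -/
theorem stmt_15 (m : ℕ) (c : ℕ → ℤ)
    (hc : c 0 ^ 2 + 2 * ∑ ℓ ∈ Finset.Icc 1 m, c ℓ ^ 2
        < c 0 + 4 * ∑ ℓ ∈ Finset.Icc 1 m, c ℓ)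
    (n : ℕ) (hn : 4 * m < n) :
    ∀ a : Lam n, a = c 0 • (1 : Lam n)
        + ∑ ℓ ∈ Finset.Icc 1 m, c ℓ • (Xp n (ℓ : ℤ) + Xp n (-(ℓ : ℤ))) →
    -- positive definite
    (∀ v : Fin 4 → Lam n, v ≠ 0 → 0 < LnA n a v v) ∧
    -- unimodular: the form represents every `ℤ`-linear functional uniquely
    (∀ f : (Fin 4 → Lam n) →ₗ[ℤ] ℤ, ∃! v : Fin 4 → Lam n, ∀ w, LnA n a v w = f w) ∧
    -- `w₁` is characteristic with the stated norm, which is `< 4n`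
    (∀ w₁ : Fin 4 → Lam n,
      w₁ = (fun j => Nn n * (ee n 2 j + ee n 3 j) - 2 * ee n 0 j) →
      (∀ v : Fin 4 → Lam n, (2 : ℤ) ∣ LnA n a w₁ v - LnA n a v v) ∧
      LnA n a w₁ w₁ = 4 * n - 4 * ((1 + 2 * c 0 + 4 * ∑ ℓ ∈ Finset.Icc 1 m, c ℓ)
        - (1 + c 0 + c 0 ^ 2 + 2 * ∑ ℓ ∈ Finset.Icc 1 m, c ℓ ^ 2)) ∧
      LnA n a w₁ w₁ < 4 * n) ∧
    -- not isomorphic to the standard form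
    ¬ ∃ φ : (Fin 4 → Lam n) ≃ₗ[ℤ] (Fin (4 * n) → ℤ),
        ∀ v w : Fin 4 → Lam n, LnA n a v w = ∑ i, φ v i * φ w i := by
  intro a ha
  haveI : NeZero n := ⟨by omega⟩
  have hconj : conj n a = a := Aux.hconj_a m c hn a ha
  have hw : ∀ w₁ : Fin 4 → Lam n,
      w₁ = (fun j => Nn n * (ee n 2 j + ee n 3 j) - 2 * ee n 0 j) →
      w₁ 0 = -2 ∧ w₁ 1 = 0 ∧ w₁ 2 = Nn n ∧ w₁ 3 = Nn n := by
    intro w₁ hw₁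
    refine ⟨?_, ?_, ?_, ?_⟩ <;>
      · rw [hw₁]
        simp [ee, Pi.single_apply]
  have hposfact : 0 < (c 0 + 4 * ∑ ℓ ∈ Finset.Icc 1 m, c ℓ)
      - (c 0 ^ 2 + 2 * ∑ ℓ ∈ Finset.Icc 1 m, c ℓ ^ 2) := by linarith
  refine ⟨fun v hv => Aux.pos_def a hconj v hv, fun f => Aux.unimodular a f, ?_, ?_⟩
  · intro w₁ hw₁
    obtain ⟨h0, h1, h2, h3⟩ := hw w₁ hw₁
    refine ⟨Aux.char_w1 m c hn a ha hconj w₁ h0 h1 h2 h3,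
      Aux.norm_w1 m c hn a ha w₁ h0 h1 h2 h3, ?_⟩
    rw [Aux.norm_w1 m c hn a ha w₁ h0 h1 h2 h3]
    linarith
  · rintro ⟨φ, hφ⟩
    set w₁ : Fin 4 → Lam n := fun j => Nn n * (ee n 2 j + ee n 3 j) - 2 * ee n 0 j
      with hw₁
    obtain ⟨h0, h1, h2, h3⟩ := hw w₁ hw₁
    have hchar := Aux.char_w1 m c hn a ha hconj w₁ h0 h1 h2 h3
    have hlt : LnA n a w₁ w₁ < 4 * (n : ℤ) := by
      rw [Aux.norm_w1 m c hn a ha w₁ h0 h1 h2 h3]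
      linarith
    set z : Fin (4 * n) → ℤ := φ w₁ with hz
    have hodd : ∀ i : Fin (4 * n), 1 ≤ z i * z i := by
      intro i
      set u : Fin 4 → Lam n := φ.symm (Pi.single i 1) with hu
      have hφu : φ u = Pi.single i 1 := φ.apply_symm_apply _
      have hdvd := hchar u
      have hLw : LnA n a w₁ u = z i := by
        rw [hφ w₁ u, hφu]
        rw [Finset.sum_eq_single i]
        · rw [Pi.single_eq_same, mul_one]
        · intro k _ hk
          rw [Pi.single_eq_of_ne hk, mul_zero]
        · simp
      have hLu : LnA n a u u = 1 := by
        rw [hφ u u, hφu]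
        rw [Finset.sum_eq_single i]
        · rw [Pi.single_eq_same, mul_one]
        · intro k _ hk
          rw [Pi.single_eq_of_ne hk, mul_zero]
        · simp
      rw [hLw, hLu] at hdvd
      have hne : z i ≠ 0 := by
        rintro hzi
        rw [hzi] at hdvd
        omega
      have := mul_self_pos.mpr hne
      omega
    have hbig : 4 * (n : ℤ) ≤ LnA n a w₁ w₁ := by
      rw [hφ w₁ w₁]
      calc 4 * (n : ℤ) = ∑ _i : Fin (4 * n), (1 : ℤ) := by
            rw [Finset.sum_const, Finset.card_univ, Fintype.card_fin]
            push_cast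
            ring
        _ ≤ ∑ i, z i * z i := Finset.sum_le_sum fun i _ => hodd i
    linarith


end
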